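/- Let α be an involutory automorphism of a Hamiltonian cycle system H of order 2n+1. Then α has exactly one fixed point. -/

import Mathlib

/-!
An involution of a set of odd size has a fixed point. If it fixed two vertices `x` and `y`, it
would map the cycle through the edge `xy` onto itself, hence act on that cycle as a graph
automorphism fixing two adjacent vertices. A vertex of a cycle has only two neighbours, so a fixed
vertex with one fixed neighbour has both neighbours fixed; walking along the (connected) cycle,
every vertex is fixed and the involution is the identity.
-/

open Pointwise

variable {V : Type*}

/-- The action of a permutation on a simple graph by relabelling vertices. -/
instance permGraphAction : MulAction (Equiv.Perm V) (SimpleGraph V) where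
  smul σ H := H.map σ.toEmbedding
  one_smul H := by
    show H.map (1 : Equiv.Perm V).toEmbedding = H
    ext a b
    simp [SimpleGraph.map_adj]
  mul_smul σ τ H := by
    ext a b
    show (H.map (σ * τ).toEmbedding).Adj a b ↔ ((H.map τ.toEmbedding).map σ.toEmbedding).Adj a b
    simp only [SimpleGraph.map_adj]
    simp only [SimpleGraph.map_adj, Equiv.coe_toEmbedding, Equiv.Perm.coe_mul,
      Function.comp_apply]
    constructor
    · rintro ⟨u, v, h, rfl, rfl⟩
      exact ⟨τ u, τ v, ⟨u, v, h, rfl, rfl⟩, rfl, rfl⟩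
    · rintro ⟨-, -, ⟨u, v, h, rfl, rfl⟩, rfl, rfl⟩
      exact ⟨u, v, h, rfl, rfl⟩

lemma perm_smul_graph (σ : Equiv.Perm V) (H : SimpleGraph V) :
    σ • H = H.map σ.toEmbedding := rfl

/-- A Hamiltonian cycle of the complete graph on `V`: a connected, 2-regular
(spanning) subgraph. -/
def IsHamCycle [Fintype V] (H : SimpleGraph V) : Prop :=
  H.Connected ∧ ∀ v : V, (H.neighborSet v).ncard = 2

/-- A Hamiltonian cycle system: a set of Hamiltonian cycles whose edge sets
partition the edge set of the complete graph. -/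
def IsHCS [Fintype V] (𝓗 : Set (SimpleGraph V)) : Prop :=
  (∀ H ∈ 𝓗, IsHamCycle H) ∧
    ∀ e ∈ (⊤ : SimpleGraph V).edgeSet, ∃! H, H ∈ 𝓗 ∧ e ∈ H.edgeSet

/-- The full automorphism group of a Hamiltonian cycle system, as the subgroup
of vertex permutations preserving the set of cycles. -/
def autHCS (𝓗 : Set (SimpleGraph V)) : Subgroup (Equiv.Perm V) :=
  MulAction.stabilizer (Equiv.Perm V) 𝓗

/-- The cycle graph traced by a map from `ZMod m` (consecutive residues are adjacent). -/
def cycleOn {W : Type*} (m : ℕ) (f : ZMod m → W) : SimpleGraph W :=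
  SimpleGraph.fromRel (fun a b => ∃ i : ZMod m, f i = a ∧ f (i + 1) = b)

namespace SimpleGraph

variable {G : SimpleGraph V}

lemma Hom.apply_eq_self_of_adj_of_fixed_adj (f : G →g G) (hf : Function.Injective f) {u v w : V}
    (hdeg : (G.neighborSet u).encard ≤ 2) (hu : f u = u) (hv : f v = v) (huv : G.Adj u v)
    (huw : G.Adj u w) : f w = w := by
  by_contra hfw
  have hwv : w ≠ v := by rintro rfl; exact hfw hv
  have hfwv : f w ≠ v := fun h => hwv (hf (h.trans hv.symm))
  have hfwu : G.Adj u (f w) := hu ▸ f.map_adj huw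
  have hthree : ({v, w, f w} : Set V).encard = 3 :=
    Set.encard_eq_three.mpr ⟨v, w, f w, hwv.symm, hfwv.symm, Ne.symm hfw, rfl⟩
  have hsub : ({v, w, f w} : Set V) ⊆ G.neighborSet u := by
    rintro z (rfl | rfl | rfl) <;> assumption
  have := hthree ▸ Set.encard_le_encard hsub
  exact absurd (this.trans hdeg) (by decide)

lemma Hom.apply_eq_self_of_walk (f : G →g G) (hf : Function.Injective f)
    (hdeg : ∀ x, (G.neighborSet x).encard ≤ 2) {a b c : V} (ha : f a = a) (hc : f c = c)
    (hac : G.Adj a c) (p : G.Walk a b) : f b = b := by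
  induction p generalizing c with
  | nil => exact ha
  | cons had p ih =>
    exact ih (f.apply_eq_self_of_adj_of_fixed_adj hf (hdeg _) ha hc hac had) ha had.symm

lemma Hom.apply_eq_self_of_connected (f : G →g G) (hf : Function.Injective f)
    (hconn : G.Connected) (hdeg : ∀ x, (G.neighborSet x).encard ≤ 2) {u v : V} (hu : f u = u)
    (hv : f v = v) (huv : G.Adj u v) (x : V) : f x = x :=
  f.apply_eq_self_of_walk hf hdeg hu hv huv (hconn u x).some

end SimpleGraph

lemma IsHamCycle.encard_neighborSet_le [Fintype V] {H : SimpleGraph V} (hH : IsHamCycle H)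
    (x : V) : (H.neighborSet x).encard ≤ 2 :=
  Set.encard_le_coe_iff_finite_ncard_le.mpr ⟨Set.toFinite _, (hH.2 x).le⟩

lemma IsHCS.smul_eq_of_fixed_edge [Fintype V] {𝓗 : Set (SimpleGraph V)} (h𝓗 : IsHCS 𝓗)
    {σ : Equiv.Perm V} (hσ : σ ∈ autHCS 𝓗) {H : SimpleGraph V} (hH : H ∈ 𝓗) {x y : V}
    (hxy : H.Adj x y) (hx : σ x = x) (hy : σ y = y) : σ • H = H := by
  have hσ𝓗 : σ • 𝓗 = 𝓗 := hσ
  obtain ⟨K, -, hK⟩ := h𝓗.2 s(x, y) (by simpa using hxy.ne)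
  have hσH : σ • H ∈ 𝓗 := hσ𝓗 ▸ Set.smul_mem_smul_set hH
  have hxyσH : (σ • H).Adj x y := ⟨hxy.ne, x, y, hxy, hx, hy⟩
  exact (hK _ ⟨hσH, hxyσH⟩).trans (hK _ ⟨hH, hxy⟩).symm

def homOfSmulEq {σ : Equiv.Perm V} {H : SimpleGraph V} (hσH : σ • H = H) : H →g H :=
  (SimpleGraph.Hom.ofLE hσH.le).comp (SimpleGraph.Iso.map σ H).toHom

/-- an involutory automorphism of an HCS of order `2n+1` has exactly one
fixed point. -/
theorem involution_unique_fixed_point [Fintype V] (n : ℕ) (hV : Fintype.card V = 2 * n + 1)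
    (𝓗 : Set (SimpleGraph V)) (h : IsHCS 𝓗) (σ : Equiv.Perm V)
    (hmem : σ ∈ autHCS 𝓗) (hord : orderOf σ = 2) :
    ∃! x : V, σ x = x := by
  have hσ2 : σ ^ 2 = 1 := hord ▸ pow_orderOf_eq_one σ
  -- the orbits of `σ` have size 1 or 2 and there is an odd number of vertices
  obtain ⟨x, hx⟩ := Equiv.Perm.exists_fixed_point_of_prime (p := 2) (n := 1) (by rw [hV]; omega)
    (by simpa using hσ2)
  refine ⟨x, hx, fun y hy => ?_⟩
  by_contra hyx
  obtain ⟨H, ⟨hH, hyxH⟩, -⟩ := h.2 s(y, x) (by simpa using hyx)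
  have hσH : σ • H = H := h.smul_eq_of_fixed_edge hmem hH hyxH hy hx
  have hσ1 : σ = 1 := Equiv.ext fun z =>
    (homOfSmulEq hσH).apply_eq_self_of_connected σ.injective (h.1 H hH).1
      (h.1 H hH).encard_neighborSet_le hy hx hyxH z
  simp [hσ1] at hord
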